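/- For every n ∈ ℕ and every nonzero z: z^n · P_n(1/z; α, β) = ((β)_n/(α+1)_n) · P_n(z; β−1, α+1). -/

import Mathlib

open Finset

/-- Pochhammer symbol `(a)_k = a (a+1) ⋯ (a+k-1)`. -/
noncomputable def poch (a : ℝ) (k : ℕ) : ℝ := ∏ i ∈ Finset.range k, (a + (i : ℝ))

/-- The Hendriksen–van Rossum polynomial `P_n(z; α, β)`. -/
noncomputable def HR (α β : ℝ) (n : ℕ) (z : ℝ) : ℝ :=
  (poch β n / poch (α + 1) n) *
    ∑ k ∈ Finset.range (n + 1),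
      poch (-(n : ℝ)) k * poch (α + 1) k /
          (poch (1 - β - (n : ℝ)) k * (Nat.factorial k : ℝ)) * z ^ k

/-- `d_m(α,β) = −(m+β)/(m+α+1)`. -/
noncomputable def dco (α β m : ℝ) : ℝ := -(m + β) / (m + α + 1)

/-- `b_m(α,β) = −m(m+α+β)/((m+α)(m+α+1))`. -/
noncomputable def bco (α β m : ℝ) : ℝ := -(m * (m + α + β)) / ((m + α) * (m + α + 1))

/-! Reversing the order of summation, the claim becomes an identity between the coefficients of
`z ^ k` on both sides, with `n = k + m`. The reflection `(1 - b - k)_k = (-1)^k (b)_k` turns every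
Pochhammer symbol with a negative argument into one with a positive argument, after which both
coefficients equal `(β)_k (k + m)! / ((α + 1 + m)_k k! m!)`. -/

lemma poch_succ (a : ℝ) (k : ℕ) : poch a (k + 1) = poch a k * (a + k) :=
  prod_range_succ _ _

lemma poch_add (a : ℝ) (m k : ℕ) : poch a (m + k) = poch a m * poch (a + m) k := by
  rw [poch, prod_range_add]
  congr 1
  refine prod_congr rfl fun i _ => ?_
  push_cast
  ring

lemma poch_one_sub_sub (b : ℝ) (k : ℕ) : poch (1 - b - k) k = (-1) ^ k * poch b k := by
  have hsign : (-1 : ℝ) ^ k = ∏ _i ∈ range k, (-1) := by simp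
  rw [poch, poch, ← prod_range_reflect (fun i => b + (i : ℝ)), hsign, ← prod_mul_distrib]
  refine prod_congr rfl fun i hi => ?_
  have hik : i + 1 ≤ k := mem_range.mp hi
  rw [Nat.cast_sub (by omega), Nat.cast_sub (by omega)]
  push_cast
  ring

lemma poch_natCast_add_one_mul_factorial (k m : ℕ) :
    poch ((k : ℝ) + 1) m * k.factorial = (k + m).factorial := by
  induction m with
  | zero => simp [poch]
  | succ m ih =>
    rw [poch_succ, mul_right_comm, ih, ← add_assoc, Nat.factorial_succ]
    push_cast
    ring

lemma poch_add_natCast_ne_zero {a : ℝ} (ha : ∀ j : ℤ, a ≠ j) (c k : ℕ) :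
    poch (a + c) k ≠ 0 :=
  prod_ne_zero_iff.mpr fun i _ h => ha (-(c + i)) (by push_cast; linarith)

lemma pow_mul_sum_one_div_pow {K : Type*} [Field K] {z : K} (hz : z ≠ 0) (c : ℕ → K) (n : ℕ) :
    z ^ n * ∑ k ∈ range (n + 1), c k * (1 / z) ^ k = ∑ k ∈ range (n + 1), c (n - k) * z ^ k := by
  rw [mul_sum, ← sum_range_reflect]
  refine sum_congr rfl fun k hk => ?_
  obtain ⟨m, rfl⟩ : ∃ m, n = k + m := ⟨n - k, by grind⟩
  rw [show k + m + 1 - 1 - k = m by omega, show k + m - k = m by omega, pow_add, one_div_pow]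
  field_simp

lemma HR_coeff_reflect {α β : ℝ} (hα : ∀ j : ℤ, α ≠ j) (hβ : ∀ j : ℤ, β ≠ j) (k m : ℕ) :
    poch β (k + m) / poch (α + 1) (k + m) *
        (poch (-(k + m : ℕ)) m * poch (α + 1) m /
          (poch (1 - β - (k + m : ℕ)) m * m.factorial)) =
      poch (-(k + m : ℕ)) k * poch β k /
        (poch (1 - (α + 1) - (k + m : ℕ)) k * k.factorial) := by
  have hn : ((k + m : ℕ) : ℝ) = k + m := by push_cast; ring
  have e1 : poch (-(k + m : ℕ)) m = (-1) ^ m * poch ((k : ℝ) + 1) m := by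
    rw [← poch_one_sub_sub, hn]; ring_nf
  have e2 : poch (1 - β - (k + m : ℕ)) m = (-1) ^ m * poch (β + k) m := by
    rw [← poch_one_sub_sub, hn]; ring_nf
  have e3 : poch (-(k + m : ℕ)) k = (-1) ^ k * poch ((m : ℝ) + 1) k := by
    rw [← poch_one_sub_sub, hn]; ring_nf
  have e4 : poch (1 - (α + 1) - (k + m : ℕ)) k = (-1) ^ k * poch (α + 1 + m) k := by
    rw [← poch_one_sub_sub, hn]; ring_nf
  have fk := poch_natCast_add_one_mul_factorial k m
  have fm := poch_natCast_add_one_mul_factorial m k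
  rw [add_comm m k] at fm
  have hα₁ : poch (α + 1) m ≠ 0 := by simpa using poch_add_natCast_ne_zero hα 1 m
  have hαm : poch (α + 1 + m) k ≠ 0 := by
    simpa [add_assoc] using poch_add_natCast_ne_zero hα (1 + m) k
  have hβk : poch (β + k) m ≠ 0 := poch_add_natCast_ne_zero hβ k m
  rw [poch_add β k m, add_comm k m, poch_add (α + 1) m k, add_comm m k, e1, e2, e3, e4]
  field_simp
  linear_combination poch β k * (fk - fm)

theorem stmt3_general (α β : ℝ)
    (hα : ∀ m : ℤ, α ≠ (m : ℝ)) (hβ : ∀ m : ℤ, β ≠ (m : ℝ))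
    (n : ℕ) (z : ℝ) (hz : z ≠ 0) :
    z ^ n * HR α β n (1 / z) = (poch β n / poch (α + 1) n) * HR (β - 1) (α + 1) n z := by
  have hβn : poch β n ≠ 0 := by simpa using poch_add_natCast_ne_zero hβ 0 n
  have hαn : poch (α + 1) n ≠ 0 := by simpa using poch_add_natCast_ne_zero hα 1 n
  have hcancel : poch β n / poch (α + 1) n * (poch (α + 1) n / poch β n) = 1 := by field_simp
  rw [HR, HR, mul_left_comm, pow_mul_sum_one_div_pow hz, sub_add_cancel, ← mul_assoc, hcancel,
    one_mul, mul_sum]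
  refine sum_congr rfl fun k hk => ?_
  obtain ⟨m, rfl⟩ : ∃ m, n = k + m := ⟨n - k, by grind⟩
  rw [← mul_assoc, show k + m - k = m by omega, HR_coeff_reflect hα hβ]

/-- `z^n · P_n(1/z; α, β) = ((β)_n/(α+1)_n) · P_n(z; β−1, α+1)` for `z ≠ 0`. -/
theorem stmt3 (α β : ℝ)
    (hα : ∀ m : ℤ, α ≠ (m : ℝ)) (hβ : ∀ m : ℤ, β ≠ (m : ℝ))
    (hαβ : ∀ m : ℤ, α + β ≠ (m : ℝ))
    (n : ℕ) (z : ℝ) (hz : z ≠ 0) :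
    z ^ n * HR α β n (1 / z) = (poch β n / poch (α + 1) n) * HR (β - 1) (α + 1) n z :=
  stmt3_general α β hα hβ n z hz
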